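/- Let d ≥ 2, s ∈ (0,1), μ > 0, 2μ + λ > 0, and let P(x,t) be the Poisson kernel for the Lamé–Navier extension problem. Then for every t > 0 the function x ↦ P(x,t) is (entrywise) absolutely integrable on ℝ^d and ∫_{ℝ^d} P(x,t) dx = I, the d×d identity matrix. -/

import Mathlib

open Real MeasureTheory

noncomputable section

/-- The entries of the Poisson kernel `P(x,t)` for the Lamé–Navier extension problem. -/
def lamePoissonEntry (d : ℕ) (s μ lam : ℝ) (x : EuclideanSpace ℝ (Fin d)) (t : ℝ)
    (i j : Fin d) : ℝ :=
  μ ^ s * (Real.Gamma ((d : ℝ) / 2 + s) / (π ^ ((d : ℝ) / 2) * Real.Gamma s)) *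
      (t ^ (2 * s) / (‖x‖ ^ 2 + μ * t ^ 2) ^ (((d : ℝ) + 2 * s) / 2)) *
      (if i = j then 1 else 0) -
    (Real.Gamma ((d : ℝ) / 2 + s) / (2 * π ^ ((d : ℝ) / 2) * Real.Gamma s)) * t ^ (2 * s) *
      (∫ σ in μ..(2 * μ + lam),
        σ ^ (s - 1) / (‖x‖ ^ 2 + σ * t ^ 2) ^ (((d : ℝ) + 2 * s) / 2)) *
      (if i = j then 1 else 0) +
    ((d : ℝ) + 2 * s) *
      (Real.Gamma ((d : ℝ) / 2 + s) / (2 * π ^ ((d : ℝ) / 2) * Real.Gamma s)) * t ^ (2 * s) *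
      (∫ σ in μ..(2 * μ + lam),
        σ ^ (s - 1) / (‖x‖ ^ 2 + σ * t ^ 2) ^ (((d : ℝ) + 2 * s + 2) / 2)) *
      (x i * x j)

/-!
The isotropic term integrates to the identity by the subordination formula
`∫ (‖x‖² + a)^(-p) dx = π^(d/2) Γ(p - d/2) / Γ(p) · a^(d/2 - p)`, which follows from
`Γ(p) y^(-p) = ∫₀^∞ u^(p-1) e^(-u y) du` and the Gaussian integral. The two `σ`-integrals
cancel: after exchanging the integrations in `x` and `σ`, for every `σ > 0` the integral of
`x_i x_j (‖x‖² + σ t²)^(-(p+1))` is `δ_ij / (2p)` times that of `(‖x‖² + σ t²)^(-p)`,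
where `p = (d + 2s)/2`, by the coordinate symmetries of `ℝ^d` and `Γ(p + 1) = p Γ(p)`.
-/

open Set Module

section Radial

variable {V : Type*} [NormedAddCommGroup V] [InnerProductSpace ℝ V] [FiniteDimensional ℝ V]
  [MeasurableSpace V] [BorelSpace V]

lemma integrable_exp_neg_mul_sq_norm {b : ℝ} (hb : 0 < b) :
    Integrable fun x : V => rexp (-b * ‖x‖ ^ 2) :=
  .of_integral_ne_zero (by rw [GaussianFourier.integral_rexp_neg_mul_sq_norm hb]; positivity)

lemma integral_rpow_mul_exp_neg_mul_norm_sq_add (a p : ℝ) {u : ℝ} (hu : 0 < u) :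
    ∫ x : V, u ^ (p - 1) * rexp (-((‖x‖ ^ 2 + a) * u))
      = π ^ ((finrank ℝ V : ℝ) / 2) * (u ^ (p - finrank ℝ V / 2 - 1) * rexp (-(a * u))) := by
  have h : ∀ x : V, u ^ (p - 1) * rexp (-((‖x‖ ^ 2 + a) * u))
      = u ^ (p - 1) * rexp (-(a * u)) * rexp (-u * ‖x‖ ^ 2) := fun x => by
    rw [mul_assoc, ← Real.exp_add]; ring_nf
  simp_rw [h]
  rw [integral_const_mul, GaussianFourier.integral_rexp_neg_mul_sq_norm hu,
    Real.div_rpow pi_pos.le hu.le, sub_sub, Real.rpow_sub hu p, Real.rpow_sub hu p,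
    Real.rpow_add hu]
  field_simp

lemma integrable_uncurry_rpow_mul_exp_neg_mul_norm_sq_add {a p : ℝ} (ha : 0 < a)
    (hp : finrank ℝ V / 2 < p) :
    Integrable
      (Function.uncurry fun (u : ℝ) (x : V) => u ^ (p - 1) * rexp (-((‖x‖ ^ 2 + a) * u)))
      ((volume.restrict (Ioi 0)).prod volume) := by
  have hmeas : AEStronglyMeasurable
      (Function.uncurry fun (u : ℝ) (x : V) => u ^ (p - 1) * rexp (-((‖x‖ ^ 2 + a) * u)))
      ((volume.restrict (Ioi 0)).prod volume) := by
    rw [← Measure.restrict_univ (μ := (volume : Measure V)), Measure.prod_restrict]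
    refine ContinuousOn.aestronglyMeasurable ?_ (measurableSet_Ioi.prod .univ)
    exact (continuousOn_fst.rpow_const fun q hq => .inl hq.1.ne').mul (by fun_prop)
  refine (integrable_prod_iff hmeas).2 ⟨?_, ?_⟩
  · filter_upwards [ae_restrict_mem measurableSet_Ioi] with u hu
    refine ((integrable_exp_neg_mul_sq_norm hu).const_mul (u ^ (p - 1) * rexp (-(a * u)))).congr
      (ae_of_all _ fun x => ?_)
    dsimp only [Function.uncurry_apply_pair]
    rw [mul_assoc, ← Real.exp_add]; ring_nf
  · have hdecay : IntegrableOn (fun u : ℝ => u ^ (p - finrank ℝ V / 2 - 1) * rexp (-(a * u)))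
        (Ioi 0) := by
      simpa using integrableOn_rpow_mul_exp_neg_mul_rpow (by linarith) zero_lt_one ha
    refine (hdecay.const_mul (π ^ ((finrank ℝ V : ℝ) / 2))).congr ?_
    filter_upwards [ae_restrict_mem measurableSet_Ioi] with u (hu : 0 < u)
    simp only [Function.uncurry_apply_pair,
      Real.norm_of_nonneg (by positivity : 0 ≤ u ^ (p - 1) * rexp _)]
    exact (integral_rpow_mul_exp_neg_mul_norm_sq_add a p hu).symm

theorem integral_rpow_neg_norm_sq_add {a p : ℝ} (ha : 0 < a) (hp : finrank ℝ V / 2 < p) :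
    ∫ x : V, (‖x‖ ^ 2 + a) ^ (-p)
      = π ^ ((finrank ℝ V : ℝ) / 2) * Gamma (p - finrank ℝ V / 2) / Gamma p
        * a ^ ((finrank ℝ V : ℝ) / 2 - p) := by
  have hp0 : 0 < p := lt_of_le_of_lt (by positivity) hp
  have hGamma : ∀ x : V, ∫ u in Ioi 0, u ^ (p - 1) * rexp (-((‖x‖ ^ 2 + a) * u))
      = Gamma p * (‖x‖ ^ 2 + a) ^ (-p) := fun x => by
    rw [integral_rpow_mul_exp_neg_mul_Ioi hp0 (by positivity), one_div,
      Real.inv_rpow (by positivity), ← Real.rpow_neg (by positivity), mul_comm]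
  have hswap := integral_integral_swap (integrable_uncurry_rpow_mul_exp_neg_mul_norm_sq_add ha hp)
  rw [setIntegral_congr_fun measurableSet_Ioi fun u hu =>
      integral_rpow_mul_exp_neg_mul_norm_sq_add a p hu, integral_const_mul,
    integral_rpow_mul_exp_neg_mul_Ioi (by linarith) ha] at hswap
  simp only [hGamma, integral_const_mul] at hswap
  rw [one_div, Real.inv_rpow ha.le, ← Real.rpow_neg ha.le, neg_sub] at hswap
  have hΓ := (Gamma_pos_of_pos hp0).ne'
  rw [← mul_right_inj' hΓ, ← hswap, div_mul_eq_mul_div, mul_div_cancel₀ _ hΓ]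
  ring

theorem integrable_rpow_neg_norm_sq_add {a p : ℝ} (ha : 0 < a) (hp : finrank ℝ V / 2 < p) :
    Integrable fun x : V => (‖x‖ ^ 2 + a) ^ (-p) := by
  have hp0 : 0 < p := lt_of_le_of_lt (by positivity) hp
  refine .of_integral_ne_zero ?_
  rw [integral_rpow_neg_norm_sq_add ha hp]
  have := Gamma_pos_of_pos (sub_pos.2 hp)
  positivity

theorem mul_integral_rpow_neg_norm_sq_add_add_one {a p : ℝ} (ha : 0 < a)
    (hp : finrank ℝ V / 2 < p) :
    p * a * ∫ x : V, (‖x‖ ^ 2 + a) ^ (-(p + 1))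
      = (p - finrank ℝ V / 2) * ∫ x : V, (‖x‖ ^ 2 + a) ^ (-p) := by
  have hp0 : 0 < p := lt_of_le_of_lt (by positivity) hp
  rw [integral_rpow_neg_norm_sq_add ha hp, integral_rpow_neg_norm_sq_add ha (by linarith),
    show p + 1 - finrank ℝ V / 2 = (p - finrank ℝ V / 2) + 1 by ring,
    Gamma_add_one hp0.ne', Gamma_add_one (sub_pos.2 hp).ne',
    show (finrank ℝ V : ℝ) / 2 - (p + 1) = (finrank ℝ V / 2 - p) - 1 by ring,
    Real.rpow_sub_one ha.ne']
  have := (Gamma_pos_of_pos hp0).ne'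
  field_simp

theorem two_mul_integral_norm_sq_mul_rpow_neg_norm_sq_add {a p : ℝ} (ha : 0 < a)
    (hp : finrank ℝ V / 2 < p) :
    2 * p * ∫ x : V, ‖x‖ ^ 2 * (‖x‖ ^ 2 + a) ^ (-(p + 1))
      = finrank ℝ V * ∫ x : V, (‖x‖ ^ 2 + a) ^ (-p) := by
  have hsplit : ∀ x : V, ‖x‖ ^ 2 * (‖x‖ ^ 2 + a) ^ (-(p + 1))
      = (‖x‖ ^ 2 + a) ^ (-p) - a * (‖x‖ ^ 2 + a) ^ (-(p + 1)) := fun x => by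
    rw [neg_add, Real.rpow_add (by positivity), Real.rpow_neg_one]
    field_simp
    ring
  simp_rw [hsplit]
  rw [integral_sub (integrable_rpow_neg_norm_sq_add ha hp)
      ((integrable_rpow_neg_norm_sq_add ha (by linarith)).const_mul a), integral_const_mul]
  linear_combination -2 * mul_integral_rpow_neg_norm_sq_add_add_one ha hp

end Radial

section Coordinates

variable {ι : Type*} [Fintype ι]

lemma abs_apply_mul_apply_le_norm_sq (x : EuclideanSpace ℝ ι) (i j : ι) :
    |x i * x j| ≤ ‖x‖ ^ 2 := by
  rw [abs_mul, sq]
  exact mul_le_mul (PiLp.norm_apply_le x i) (PiLp.norm_apply_le x j) (abs_nonneg _)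
    (norm_nonneg _)

theorem integral_apply_mul_apply_mul_norm_of_ne (g : ℝ → ℝ) {i j : ι} (hij : i ≠ j) :
    ∫ x : EuclideanSpace ℝ ι, x i * x j * g ‖x‖ = 0 := by
  classical
  let e : EuclideanSpace ℝ ι ≃ₗᵢ[ℝ] EuclideanSpace ℝ ι :=
    LinearIsometryEquiv.piLpCongrRight 2 fun k =>
      if k = i then LinearIsometryEquiv.neg ℝ else LinearIsometryEquiv.refl ℝ ℝ
  have he : ∀ x k, e x k = if k = i then -x k else x k := fun x k => by
    simp only [e, LinearIsometryEquiv.piLpCongrRight_apply, PiLp.toLp_apply]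
    split <;> simp
  have hodd := MeasureTheory.integral_comp e fun x => x i * x j * g ‖x‖
  simp only [he, if_pos, if_neg hij.symm, e.norm_map, neg_mul, integral_neg] at hodd
  linarith

theorem card_mul_integral_apply_mul_apply_mul_norm {g : ℝ → ℝ} {i : ι}
    (hg : Integrable fun x : EuclideanSpace ℝ ι => x i * x i * g ‖x‖) :
    Fintype.card ι * ∫ x : EuclideanSpace ℝ ι, x i * x i * g ‖x‖
      = ∫ x : EuclideanSpace ℝ ι, ‖x‖ ^ 2 * g ‖x‖ := by
  classical
  have hswap : ∀ k, (fun x : EuclideanSpace ℝ ι => x i * x i * g ‖x‖)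
      ∘ LinearIsometryEquiv.piLpCongrLeft 2 ℝ ℝ (Equiv.swap i k)
      = fun x => x k * x k * g ‖x‖ := fun k => by
    ext x
    simp [Equiv.piCongrLeft']
  have hint : ∀ k, Integrable fun x : EuclideanSpace ℝ ι => x k * x k * g ‖x‖ := fun k => by
    rw [← hswap k, MeasureTheory.integrable_comp]
    exact hg
  have heq : ∀ k, ∫ x : EuclideanSpace ℝ ι, x k * x k * g ‖x‖
      = ∫ x : EuclideanSpace ℝ ι, x i * x i * g ‖x‖ := fun k => by
    rw [← hswap k]
    exact MeasureTheory.integral_comp (LinearIsometryEquiv.piLpCongrLeft 2 ℝ ℝ (Equiv.swap i k))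
      fun x : EuclideanSpace ℝ ι => x i * x i * g ‖x‖
  calc (Fintype.card ι : ℝ) * ∫ x : EuclideanSpace ℝ ι, x i * x i * g ‖x‖
      = ∑ k, ∫ x : EuclideanSpace ℝ ι, x k * x k * g ‖x‖ := by simp [heq]
    _ = ∫ x : EuclideanSpace ℝ ι, ‖x‖ ^ 2 * g ‖x‖ := by
      rw [← integral_finsetSum _ fun k _ => hint k]
      simp_rw [EuclideanSpace.real_norm_sq_eq, Finset.sum_mul, sq]

lemma norm_apply_mul_apply_mul_rpow_neg_norm_sq_add_le {a : ℝ} (ha : 0 < a) (p : ℝ)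
    (x : EuclideanSpace ℝ ι) (i j : ι) :
    ‖x i * x j * (‖x‖ ^ 2 + a) ^ (-(p + 1))‖ ≤ (‖x‖ ^ 2 + a) ^ (-p) := by
  have hR : 0 < ‖x‖ ^ 2 + a := by positivity
  calc ‖x i * x j * (‖x‖ ^ 2 + a) ^ (-(p + 1))‖
      = |x i * x j| * (‖x‖ ^ 2 + a) ^ (-(p + 1)) := by
        rw [norm_mul, Real.norm_eq_abs, Real.norm_of_nonneg (by positivity)]
    _ ≤ (‖x‖ ^ 2 + a) * (‖x‖ ^ 2 + a) ^ (-(p + 1)) := by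
        gcongr
        linarith [abs_apply_mul_apply_le_norm_sq x i j]
    _ = (‖x‖ ^ 2 + a) ^ (-p) := by
        rw [neg_add, Real.rpow_add hR, Real.rpow_neg_one]
        field_simp

theorem integrable_apply_mul_apply_mul_rpow_neg_norm_sq_add {a p : ℝ} (ha : 0 < a)
    (hp : Fintype.card ι / 2 < p) (i j : ι) :
    Integrable fun x : EuclideanSpace ℝ ι => x i * x j * (‖x‖ ^ 2 + a) ^ (-(p + 1)) :=
  (integrable_rpow_neg_norm_sq_add ha (by rwa [finrank_euclideanSpace])).mono' (by fun_prop)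
    (ae_of_all _ fun x => norm_apply_mul_apply_mul_rpow_neg_norm_sq_add_le ha p x i j)

theorem two_mul_integral_apply_mul_apply_mul_rpow_neg_norm_sq_add [DecidableEq ι] {a p : ℝ}
    (ha : 0 < a) (hp : Fintype.card ι / 2 < p) (i j : ι) :
    2 * p * ∫ x : EuclideanSpace ℝ ι, x i * x j * (‖x‖ ^ 2 + a) ^ (-(p + 1))
      = if i = j then ∫ x : EuclideanSpace ℝ ι, (‖x‖ ^ 2 + a) ^ (-p) else 0 := by
  split_ifs with hij
  · subst hij
    have hcard : (Fintype.card ι : ℝ) ≠ 0 :=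
      Nat.cast_ne_zero.2 (Fintype.card_pos_iff.2 ⟨i⟩).ne'
    have hp' : finrank ℝ (EuclideanSpace ℝ ι) / 2 < p := by rwa [finrank_euclideanSpace]
    refine mul_left_cancel₀ hcard ?_
    rw [mul_left_comm,
      card_mul_integral_apply_mul_apply_mul_norm (g := fun r => (r ^ 2 + a) ^ (-(p + 1)))
      (integrable_apply_mul_apply_mul_rpow_neg_norm_sq_add ha hp i i),
      two_mul_integral_norm_sq_mul_rpow_neg_norm_sq_add ha hp', finrank_euclideanSpace]
  · rw [integral_apply_mul_apply_mul_norm_of_ne (fun r => (r ^ 2 + a) ^ (-(p + 1))) hij, mul_zero]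

end Coordinates

section IntervalFubini

variable {α E : Type*} [MeasurableSpace α] {μ : Measure α} [SFinite μ] [NormedAddCommGroup E]
  [NormedSpace ℝ E]

theorem integrable_intervalIntegral_and_integral_swap {a b : ℝ} {F : ℝ → α → E} {g : ℝ → ℝ}
    {h : α → ℝ}
    (hF : AEStronglyMeasurable (Function.uncurry F) ((volume.restrict (uIoc a b)).prod μ))
    (hg : IntervalIntegrable g volume a b) (hh : Integrable h μ)
    (hFgh : ∀ σ ∈ uIoc a b, ∀ x, ‖F σ x‖ ≤ g σ * h x) :
    Integrable (fun x => ∫ σ in a..b, F σ x) μ ∧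
      ∫ x, (∫ σ in a..b, F σ x) ∂μ = ∫ σ in a..b, ∫ x, F σ x ∂μ := by
  have hprod : Integrable (Function.uncurry F) ((volume.restrict (uIoc a b)).prod μ) := by
    refine ((intervalIntegrable_iff.1 hg).mul_prod hh).mono' hF ?_
    filter_upwards [Measure.quasiMeasurePreserving_fst.ae (ae_restrict_mem measurableSet_uIoc)]
      with z hz
    exact hFgh z.1 hz z.2
  refine ⟨?_, (intervalIntegral_integral_swap hprod).symm⟩
  simp_rw [intervalIntegral.intervalIntegral_eq_integral_uIoc]
  exact hprod.integral_prod_right.smul (if a ≤ b then (1 : ℝ) else -1)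

end IntervalFubini

section LameCorrection

variable {ι : Type*} [Fintype ι] [DecidableEq ι]

def lameCorrectionDensity (p s c : ℝ) (i j : ι) (σ : ℝ) (x : EuclideanSpace ℝ ι) : ℝ :=
  σ ^ (s - 1) * (2 * p * (x i * x j * (‖x‖ ^ 2 + σ * c) ^ (-(p + 1)))
    - (if i = j then 1 else 0) * (‖x‖ ^ 2 + σ * c) ^ (-p))

def lameCorrection (p s c a b : ℝ) (i j : ι) (x : EuclideanSpace ℝ ι) : ℝ :=
  ∫ σ in a..b, lameCorrectionDensity p s c i j σ x

theorem integral_lameCorrectionDensity_eq_zero {p s c σ : ℝ} (hp : Fintype.card ι / 2 < p)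
    (hc : 0 < c) (hσ : 0 < σ) (i j : ι) :
    ∫ x, lameCorrectionDensity p s c i j σ x = 0 := by
  have hσc := mul_pos hσ hc
  simp only [lameCorrectionDensity]
  rw [integral_const_mul, integral_sub
      ((integrable_apply_mul_apply_mul_rpow_neg_norm_sq_add hσc hp i j).const_mul _)
      ((integrable_rpow_neg_norm_sq_add hσc (by rwa [finrank_euclideanSpace])).const_mul _),
    integral_const_mul, integral_const_mul,
    two_mul_integral_apply_mul_apply_mul_rpow_neg_norm_sq_add hσc hp]
  split_ifs <;> simp

theorem norm_lameCorrectionDensity_le {p s c m σ : ℝ} (hp : 0 ≤ p) (hc : 0 < c) (hm : 0 < m)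
    (hmσ : m ≤ σ) (i j : ι) (x : EuclideanSpace ℝ ι) :
    ‖lameCorrectionDensity p s c i j σ x‖
      ≤ σ ^ (s - 1) * (2 * p + 1) * (‖x‖ ^ 2 + m * c) ^ (-p) := by
  have hσ : 0 < σ := hm.trans_le hmσ
  have hA := norm_apply_mul_apply_mul_rpow_neg_norm_sq_add_le (mul_pos hσ hc) p x i j
  have hB : (‖x‖ ^ 2 + σ * c) ^ (-p) ≤ (‖x‖ ^ 2 + m * c) ^ (-p) :=
    Real.rpow_le_rpow_of_nonpos (by positivity) (by gcongr) (neg_nonpos.2 hp)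
  have hδ : ‖(if i = j then (1 : ℝ) else 0)‖ ≤ 1 := by split_ifs <;> simp
  have hsub := norm_sub_le (2 * p * (x i * x j * (‖x‖ ^ 2 + σ * c) ^ (-(p + 1))))
    ((if i = j then 1 else 0) * (‖x‖ ^ 2 + σ * c) ^ (-p))
  rw [norm_mul (2 * p), norm_mul (if i = j then (1 : ℝ) else 0),
    Real.norm_of_nonneg (by positivity : 0 ≤ 2 * p),
    Real.norm_of_nonneg (by positivity : 0 ≤ (‖x‖ ^ 2 + σ * c) ^ (-p))] at hsub
  rw [lameCorrectionDensity, norm_mul, Real.norm_of_nonneg (by positivity),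
    mul_assoc (σ ^ (s - 1))]
  gcongr
  nlinarith [norm_nonneg (if i = j then (1 : ℝ) else 0),
    Real.rpow_nonneg (by positivity : 0 ≤ ‖x‖ ^ 2 + σ * c) (-p)]

theorem integrable_lameCorrection_and_integral_eq_zero {p s c a b : ℝ}
    (hp : Fintype.card ι / 2 < p) (hc : 0 < c) (ha : 0 < a) (hb : 0 < b) (i j : ι) :
    Integrable (lameCorrection p s c a b i j) ∧ ∫ x, lameCorrection p s c a b i j x = 0 := by
  have hm : 0 < min a b := lt_min ha hb
  have hpos : ∀ σ ∈ uIcc a b, 0 < σ := fun σ hσ => hm.trans_le hσ.1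
  have hmeas : AEStronglyMeasurable (Function.uncurry (lameCorrectionDensity p s c i j))
      ((volume.restrict (uIoc a b)).prod volume) := by
    apply Measurable.aestronglyMeasurable
    unfold lameCorrectionDensity
    fun_prop
  have hg : IntervalIntegrable (fun σ : ℝ => σ ^ (s - 1) * (2 * p + 1)) volume a b :=
    ContinuousOn.intervalIntegrable
      ((continuousOn_id.rpow_const fun σ hσ => .inl (hpos σ hσ).ne').mul continuousOn_const)
  obtain ⟨hint, hswap⟩ := integrable_intervalIntegral_and_integral_swap hmeas hg
    (integrable_rpow_neg_norm_sq_add (V := EuclideanSpace ℝ ι) (mul_pos hm hc)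
      (by rwa [finrank_euclideanSpace]))
    fun σ hσ => norm_lameCorrectionDensity_le (le_trans (by positivity) hp.le) hc hm hσ.1.le i j
  refine ⟨hint, hswap.trans ?_⟩
  rw [intervalIntegral.integral_congr (g := fun _ => (0 : ℝ)) fun σ hσ =>
      integral_lameCorrectionDensity_eq_zero hp hc (hpos σ hσ) i j,
    intervalIntegral.integral_zero]

end LameCorrection

def lamePoissonConst (d : ℕ) (s : ℝ) : ℝ :=
  Gamma ((d : ℝ) / 2 + s) / (π ^ ((d : ℝ) / 2) * Gamma s)

theorem lamePoissonEntry_eq {d : ℕ} {s μ lam t : ℝ} (hμ : 0 < μ) (hlam : 0 < 2 * μ + lam)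
    (ht : 0 < t) (x : EuclideanSpace ℝ (Fin d)) (i j : Fin d) :
    lamePoissonEntry d s μ lam x t i j
      = (if i = j then 1 else 0) * (μ ^ s * lamePoissonConst d s * t ^ (2 * s)
          * (‖x‖ ^ 2 + μ * t ^ 2) ^ (-(((d : ℝ) + 2 * s) / 2)))
        + lamePoissonConst d s / 2 * t ^ (2 * s)
          * lameCorrection (((d : ℝ) + 2 * s) / 2) s (t ^ 2) μ (2 * μ + lam) i j x := by
  set q := ((d : ℝ) + 2 * s) / 2
  have hR : ∀ σ ∈ uIcc μ (2 * μ + lam), 0 < ‖x‖ ^ 2 + σ * t ^ 2 := fun σ hσ =>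
    have : 0 < σ := (lt_min hμ hlam).trans_le hσ.1
    by positivity
  have hJ : ∀ p : ℝ, ∫ σ in μ..(2 * μ + lam), σ ^ (s - 1) / (‖x‖ ^ 2 + σ * t ^ 2) ^ p
      = ∫ σ in μ..(2 * μ + lam), σ ^ (s - 1) * (‖x‖ ^ 2 + σ * t ^ 2) ^ (-p) := fun p =>
    intervalIntegral.integral_congr fun σ hσ => by
      rw [Real.rpow_neg (hR σ hσ).le, div_eq_mul_inv]
  have hII : ∀ p : ℝ,
      IntervalIntegrable (fun σ => σ ^ (s - 1) * (‖x‖ ^ 2 + σ * t ^ 2) ^ (-p))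
        volume μ (2 * μ + lam) := fun p =>
    ContinuousOn.intervalIntegrable <|
      (continuousOn_id.rpow_const fun σ hσ => .inl ((lt_min hμ hlam).trans_le hσ.1).ne').mul
        ((Continuous.continuousOn (by fun_prop)).rpow_const fun σ hσ => .inl (hR σ hσ).ne')
  have hcorr : lameCorrection q s (t ^ 2) μ (2 * μ + lam) i j x
      = 2 * q * (x i * x j)
          * (∫ σ in μ..(2 * μ + lam), σ ^ (s - 1) * (‖x‖ ^ 2 + σ * t ^ 2) ^ (-(q + 1)))
        - (if i = j then 1 else 0)
          * ∫ σ in μ..(2 * μ + lam), σ ^ (s - 1) * (‖x‖ ^ 2 + σ * t ^ 2) ^ (-q) := by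
    rw [lameCorrection, ← intervalIntegral.integral_const_mul,
      ← intervalIntegral.integral_const_mul,
      ← intervalIntegral.integral_sub ((hII _).const_mul _) ((hII _).const_mul _)]
    congr 1
    ext σ
    rw [lameCorrectionDensity]
    ring
  rw [lamePoissonEntry, show ((d : ℝ) + 2 * s + 2) / 2 = q + 1 by ring, hJ, hJ, hcorr,
    lamePoissonConst, div_eq_mul_inv (t ^ (2 * s)), ← Real.rpow_neg (by positivity)]
  ring

theorem lamePoissonConst_mul_integral_eq_one {d : ℕ} {s μ t : ℝ} (hs : 0 < s) (hμ : 0 < μ)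
    (ht : 0 < t) :
    μ ^ s * lamePoissonConst d s * t ^ (2 * s)
      * ∫ x : EuclideanSpace ℝ (Fin d), (‖x‖ ^ 2 + μ * t ^ 2) ^ (-(((d : ℝ) + 2 * s) / 2))
      = 1 := by
  rw [integral_rpow_neg_norm_sq_add (by positivity) (by simp; linarith), finrank_euclideanSpace_fin,
    show ((d : ℝ) + 2 * s) / 2 = d / 2 + s by ring, add_sub_cancel_left, sub_add_cancel_left,
    Real.mul_rpow hμ.le (by positivity), ← Real.rpow_natCast t 2, ← Real.rpow_mul ht.le,
    lamePoissonConst]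
  have := Gamma_pos_of_pos hs
  have := Gamma_pos_of_pos (show 0 < (d : ℝ) / 2 + s by positivity)
  rw [Real.rpow_neg hμ.le, show ((2 : ℕ) : ℝ) * -s = -(2 * s) by push_cast; ring,
    Real.rpow_neg ht.le]
  field_simp

theorem lamePoisson_integral_eq_id_general (d : ℕ) (s : ℝ)
    (hs : s ∈ Set.Ioo (0 : ℝ) 1) (μ lam : ℝ) (hμ : 0 < μ) (hlam : 0 < 2 * μ + lam)
    (t : ℝ) (ht : 0 < t) :
    ∀ i j : Fin d,
      (Integrable fun x : EuclideanSpace ℝ (Fin d) => lamePoissonEntry d s μ lam x t i j) ∧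
      (∫ x : EuclideanSpace ℝ (Fin d), lamePoissonEntry d s μ lam x t i j) =
        (if i = j then 1 else 0) := by
  intro i j
  have hq : (Fintype.card (Fin d) : ℝ) / 2 < ((d : ℝ) + 2 * s) / 2 := by
    rw [Fintype.card_fin]; linarith [hs.1]
  obtain ⟨hcorr_int, hcorr⟩ :=
    integrable_lameCorrection_and_integral_eq_zero (s := s) hq (pow_pos ht 2) hμ hlam i j
  have hiso_int := integrable_rpow_neg_norm_sq_add (V := EuclideanSpace ℝ (Fin d))
    (by positivity : 0 < μ * t ^ 2) (by rwa [finrank_euclideanSpace])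
  simp_rw [lamePoissonEntry_eq hμ hlam ht]
  refine ⟨((hiso_int.const_mul _).const_mul _).add (hcorr_int.const_mul _), ?_⟩
  rw [integral_add ((hiso_int.const_mul _).const_mul _) (hcorr_int.const_mul _),
    integral_const_mul, integral_const_mul, integral_const_mul, hcorr,
    lamePoissonConst_mul_integral_eq_one hs.1 hμ ht]
  ring

/-- For each `t > 0` the Lamé–Navier Poisson kernel is absolutely integrable in `x`
(entrywise) and its total integral is the identity matrix. -/
theorem lamePoisson_integral_eq_id (d : ℕ) (hd : 2 ≤ d) (s : ℝ)
    (hs : s ∈ Set.Ioo (0 : ℝ) 1) (μ lam : ℝ) (hμ : 0 < μ) (hlam : 0 < 2 * μ + lam)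
    (t : ℝ) (ht : 0 < t) :
    ∀ i j : Fin d,
      (Integrable fun x : EuclideanSpace ℝ (Fin d) => lamePoissonEntry d s μ lam x t i j) ∧
      (∫ x : EuclideanSpace ℝ (Fin d), lamePoissonEntry d s μ lam x t i j) =
        (if i = j then 1 else 0) :=
  lamePoisson_integral_eq_id_general d s hs μ lam hμ hlam t ht
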